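/- Let σ > 0, β ≥ 0, T > 0 and set K = [0,T]×[−1,1]×V with V = [−10,10]. Suppose f is of class C^{(1,1,2)} on an open neighborhood of K, satisfies ∂_t f + v ∂_x f = ∂_v(σ ∂_v f + β v f) on K, satisfies f(0,x,v) = f₀(x,v) for (x,v) ∈ [−1,1]×V, and satisfies the inflow condition f(t,x,v) = g(t,x,v) on the incoming boundary points of K. If u is of class C^{(1,1,2)} on an open neighborhood of K and ‖∂_t^a ∂_x^b ∂_v^c (f − u)‖_{L^∞(K)} < ε for every multi-index (a,b,c) with a ≤ 1, b ≤ 1, c ≤ 2, then Loss_GE(u) + Loss_IC(u) + Loss_BC(u) ≤ C ε², where C is a constant depending only on σ, β and T (one may take C = 40T(11 + σ + 11β)² + 40 + 20T). -/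
import Mathlib


open Real MeasureTheory Set Filter

/-- Partial derivative in the time variable. -/
noncomputable def Dt (f : ℝ → ℝ → ℝ → ℝ) : ℝ → ℝ → ℝ → ℝ :=
  fun t x v => deriv (fun s => f s x v) t

/-- Partial derivative in the space variable. -/
noncomputable def Dx (f : ℝ → ℝ → ℝ → ℝ) : ℝ → ℝ → ℝ → ℝ :=
  fun t x v => deriv (fun y => f t y v) x

/-- Partial derivative in the velocity variable. -/
noncomputable def Dv (f : ℝ → ℝ → ℝ → ℝ) : ℝ → ℝ → ℝ → ℝ :=
  fun t x v => deriv (fun w => f t x w) v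

/-- Mixed partial derivative ∂_t^a ∂_x^b ∂_v^c. -/
noncomputable def mixedD (a b c : ℕ) (f : ℝ → ℝ → ℝ → ℝ) : ℝ → ℝ → ℝ → ℝ :=
  Dt^[a] (Dx^[b] (Dv^[c] f))

/-- `f` is of class C^{(1,1,2)} on `U`: all mixed partial derivatives
∂_t^a ∂_x^b ∂_v^c with a ≤ 1, b ≤ 1, c ≤ 2 exist and are continuous on `U`. -/
def IsC112On (f : ℝ → ℝ → ℝ → ℝ) (U : Set (ℝ × ℝ × ℝ)) : Prop :=
  (∀ a b c : ℕ, a ≤ 1 → b ≤ 1 → c ≤ 2 → ∀ p ∈ U,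
    ContinuousAt (fun q : ℝ × ℝ × ℝ => mixedD a b c f q.1 q.2.1 q.2.2) p) ∧
  (∀ b c : ℕ, b ≤ 1 → c ≤ 2 → ∀ p ∈ U,
    DifferentiableAt ℝ (fun s => mixedD 0 b c f s p.2.1 p.2.2) p.1) ∧
  (∀ c : ℕ, c ≤ 2 → ∀ p ∈ U,
    DifferentiableAt ℝ (fun y => mixedD 0 0 c f p.1 y p.2.2) p.2.1) ∧
  (∀ c : ℕ, c ≤ 1 → ∀ p ∈ U,
    DifferentiableAt ℝ (fun w => mixedD 0 0 c f p.1 p.2.1 w) p.2.2)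

/-- The compact set K = [0,T] × [−1,1] × V with V = [−10,10]. -/
def Kset (T : ℝ) : Set (ℝ × ℝ × ℝ) :=
  Set.Icc (0 : ℝ) T ×ˢ Set.Icc (-1 : ℝ) 1 ×ˢ Set.Icc (-10 : ℝ) 10

/-- The Fokker–Planck residual ∂_t u + v ∂_x u − σ ∂_{vv} u − β ∂_v(v u). -/
noncomputable def FPresidual (σ β : ℝ) (u : ℝ → ℝ → ℝ → ℝ) : ℝ → ℝ → ℝ → ℝ :=
  fun t x v => Dt u t x v + v * Dx u t x v - σ * Dv (Dv u) t x v
    - β * Dv (fun t' x' w => w * u t' x' w) t x v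

/-- Loss for the governing equation. -/
noncomputable def LossGE (σ β T : ℝ) (u : ℝ → ℝ → ℝ → ℝ) : ℝ :=
  ∫ t in (0 : ℝ)..T, ∫ x in (-1 : ℝ)..(1 : ℝ), ∫ v in (-10 : ℝ)..(10 : ℝ),
    (FPresidual σ β u t x v) ^ 2

/-- Loss for the initial condition. -/
noncomputable def LossIC (f0 : ℝ → ℝ → ℝ) (u : ℝ → ℝ → ℝ → ℝ) : ℝ :=
  ∫ x in (-1 : ℝ)..(1 : ℝ), ∫ v in (-10 : ℝ)..(10 : ℝ), (u 0 x v - f0 x v) ^ 2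

/-- Loss for the inflow boundary condition with datum g. -/
noncomputable def LossBCinflow (T : ℝ) (g u : ℝ → ℝ → ℝ → ℝ) : ℝ :=
  ∫ t in (0 : ℝ)..T,
    ((∫ v in (-10 : ℝ)..(0 : ℝ), (u t 1 v - g t 1 v) ^ 2) +
     (∫ v in (0 : ℝ)..(10 : ℝ), (u t (-1) v - g t (-1) v) ^ 2))

lemma abs_add4' (a b c d : ℝ) : |a + b - c - d| ≤ |a| + |b| + |c| + |d| := by
  rw [abs_le]
  constructor
  · linarith [neg_abs_le a, neg_abs_le b, le_abs_self c, le_abs_self d]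
  · linarith [le_abs_self a, le_abs_self b, neg_abs_le c, neg_abs_le d]

lemma abs_intervalIntegral_le' {C : ℝ} (f : ℝ → ℝ) {a b : ℝ} (hab : a ≤ b)
    (h : ∀ x ∈ Set.Ioc a b, |f x| ≤ C) :
    |∫ x in a..b, f x| ≤ C * (b - a) := by
  have h2 : ∀ x ∈ Set.uIoc a b, ‖f x‖ ≤ C := by
    intro x hx
    rw [Set.uIoc_of_le hab] at hx
    simpa [Real.norm_eq_abs] using h x hx
  have := intervalIntegral.norm_integral_le_of_norm_le_const h2
  simpa [Real.norm_eq_abs, abs_of_nonneg (sub_nonneg.mpr hab)] using this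

lemma intervalIntegral_le' {C : ℝ} (f : ℝ → ℝ) {a b : ℝ} (hab : a ≤ b)
    (h : ∀ x ∈ Set.Ioc a b, |f x| ≤ C) :
    (∫ x in a..b, f x) ≤ C * (b - a) :=
  (le_abs_self _).trans (abs_intervalIntegral_le' f hab h)

set_option maxHeartbeats 1600000 in
/-- Quantitative bound: if `f` solves the Fokker–Planck problem with inflow
data `g` on K and all mixed partial derivatives ∂_t^a ∂_x^b ∂_v^c (a ≤ 1, b ≤ 1, c ≤ 2) of
`f − u` have sup-norm on K less than ε, then the total loss of `u` is at most C ε² with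
C = 40T(11 + σ + 11β)² + 40 + 20T. -/
theorem statement2 (σ β T ε : ℝ) (hσ : 0 < σ) (hβ : 0 ≤ β) (hT : 0 < T) (hε : 0 < ε)
    (f u : ℝ → ℝ → ℝ → ℝ) (f0 : ℝ → ℝ → ℝ) (g : ℝ → ℝ → ℝ → ℝ)
    (hfreg : ∃ U : Set (ℝ × ℝ × ℝ), IsOpen U ∧ Kset T ⊆ U ∧ IsC112On f U)
    (hPDE : ∀ t ∈ Set.Icc (0 : ℝ) T, ∀ x ∈ Set.Icc (-1 : ℝ) 1, ∀ v ∈ Set.Icc (-10 : ℝ) 10,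
      Dt f t x v + v * Dx f t x v
        = σ * Dv (Dv f) t x v + β * Dv (fun t' x' w => w * f t' x' w) t x v)
    (hIC : ∀ x ∈ Set.Icc (-1 : ℝ) 1, ∀ v ∈ Set.Icc (-10 : ℝ) 10, f 0 x v = f0 x v)
    (hBC : ∀ t ∈ Set.Icc (0 : ℝ) T,
      (∀ v ∈ Set.Icc (-10 : ℝ) 10, v < 0 → f t 1 v = g t 1 v) ∧
      (∀ v ∈ Set.Icc (-10 : ℝ) 10, 0 < v → f t (-1) v = g t (-1) v))
    (hureg : ∃ U : Set (ℝ × ℝ × ℝ), IsOpen U ∧ Kset T ⊆ U ∧ IsC112On u U)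
    (hclose : ∀ a b c : ℕ, a ≤ 1 → b ≤ 1 → c ≤ 2 →
      ∀ t ∈ Set.Icc (0 : ℝ) T, ∀ x ∈ Set.Icc (-1 : ℝ) 1, ∀ v ∈ Set.Icc (-10 : ℝ) 10,
        |mixedD a b c (fun t' x' v' => f t' x' v' - u t' x' v') t x v| < ε) :
    LossGE σ β T u + LossIC f0 u + LossBCinflow T g u
      ≤ (40 * T * (11 + σ + 11 * β) ^ 2 + 40 + 20 * T) * ε ^ 2 := by
  obtain ⟨Uf, hUfo, hKUf, hf⟩ := hfreg
  obtain ⟨Uu, hUuo, hKUu, hu⟩ := hureg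
  -- pointwise bound on the residual on K
  have hres : ∀ t ∈ Set.Icc (0:ℝ) T, ∀ x ∈ Set.Icc (-1:ℝ) 1, ∀ v ∈ Set.Icc (-10:ℝ) 10,
      (FPresidual σ β u t x v) ^ 2 ≤ ((11 + σ + 11*β) * ε) ^ 2 := by
    intro t ht x hx v hv
    have hpK : ((t, x, v) : ℝ × ℝ × ℝ) ∈ Kset T := ⟨ht, hx, hv⟩
    have hpf : ((t, x, v) : ℝ × ℝ × ℝ) ∈ Uf := hKUf hpK
    have hpu : ((t, x, v) : ℝ × ℝ × ℝ) ∈ Uu := hKUu hpK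
    -- differentiability facts
    have hft : DifferentiableAt ℝ (fun s => f s x v) t :=
      hf.2.1 0 0 (by norm_num) (by norm_num) (t, x, v) hpf
    have hut : DifferentiableAt ℝ (fun s => u s x v) t :=
      hu.2.1 0 0 (by norm_num) (by norm_num) (t, x, v) hpu
    have hfx : DifferentiableAt ℝ (fun y => f t y v) x :=
      hf.2.2.1 0 (by norm_num) (t, x, v) hpf
    have hux : DifferentiableAt ℝ (fun y => u t y v) x :=
      hu.2.2.1 0 (by norm_num) (t, x, v) hpu
    have hfv : DifferentiableAt ℝ (fun z => f t x z) v :=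
      hf.2.2.2 0 (by norm_num) (t, x, v) hpf
    have huv : DifferentiableAt ℝ (fun z => u t x z) v :=
      hu.2.2.2 0 (by norm_num) (t, x, v) hpu
    have hfvv : DifferentiableAt ℝ (fun z => Dv f t x z) v :=
      hf.2.2.2 1 (by norm_num) (t, x, v) hpf
    have huvv : DifferentiableAt ℝ (fun z => Dv u t x z) v :=
      hu.2.2.2 1 (by norm_num) (t, x, v) hpu
    -- derivative identities
    have eDtw : Dt (fun t' x' v' => f t' x' v' - u t' x' v') t x v
        = Dt f t x v - Dt u t x v := by
      simp only [Dt]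
      exact deriv_sub hft hut
    have eDxw : Dx (fun t' x' v' => f t' x' v' - u t' x' v') t x v
        = Dx f t x v - Dx u t x v := by
      simp only [Dx]
      exact deriv_sub hfx hux
    have eDvw : Dv (fun t' x' v' => f t' x' v' - u t' x' v') t x v
        = Dv f t x v - Dv u t x v := by
      simp only [Dv]
      exact deriv_sub hfv huv
    have hmem : ∀ᶠ v' in nhds v, ((t, x, v') : ℝ × ℝ × ℝ) ∈ Uf ∩ Uu := by
      have hc : Continuous fun v' : ℝ => ((t, x, v') : ℝ × ℝ × ℝ) := by continuity
      exact hc.continuousAt.preimage_mem_nhds ((hUfo.inter hUuo).mem_nhds ⟨hpf, hpu⟩)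
    have heq : (fun v' => Dv (fun t' x' v'' => f t' x' v'' - u t' x' v'') t x v')
        =ᶠ[nhds v] fun v' => Dv f t x v' - Dv u t x v' := by
      filter_upwards [hmem] with v' hv'
      have h1 : DifferentiableAt ℝ (fun z => f t x z) v' :=
        hf.2.2.2 0 (by norm_num) (t, x, v') hv'.1
      have h2 : DifferentiableAt ℝ (fun z => u t x z) v' :=
        hu.2.2.2 0 (by norm_num) (t, x, v') hv'.2
      simp only [Dv]
      exact deriv_sub h1 h2
    have eDvvw : Dv (Dv (fun t' x' v' => f t' x' v' - u t' x' v')) t x v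
        = Dv (Dv f) t x v - Dv (Dv u) t x v := by
      have h1 : Dv (Dv (fun t' x' v' => f t' x' v' - u t' x' v')) t x v
          = deriv (fun v' => Dv f t x v' - Dv u t x v') v := heq.deriv_eq
      rw [h1]
      exact deriv_sub hfvv huvv
    -- velocity-multiplied derivatives
    have eVf : Dv (fun t' x' z => z * f t' x' z) t x v = f t x v + v * Dv f t x v := by
      have h := (hasDerivAt_id v).mul hfv.hasDerivAt
      simp only [one_mul, id_eq] at h
      exact h.deriv
    have eVu : Dv (fun t' x' z => z * u t' x' z) t x v = u t x v + v * Dv u t x v := by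
      have h := (hasDerivAt_id v).mul huv.hasDerivAt
      simp only [one_mul, id_eq] at h
      exact h.deriv
    have eVw : Dv (fun t' x' z => z * (f t' x' z - u t' x' z)) t x v
        = (f t x v - u t x v) + v * Dv (fun t' x' v' => f t' x' v' - u t' x' v') t x v := by
      have h := (hasDerivAt_id v).mul (hfv.sub huv).hasDerivAt
      simp only [one_mul, id_eq] at h
      have h2 : Dv (fun t' x' v' => f t' x' v' - u t' x' v') t x v
          = deriv (fun z => f t x z - u t x z) v := rfl
      rw [h2]
      exact h.deriv
    -- express residual of u via residual of w
    have e2 : Dt u t x v = Dt f t x v - Dt (fun t' x' v' => f t' x' v' - u t' x' v') t x v := by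
      rw [eDtw]; ring
    have e2x : Dx u t x v = Dx f t x v - Dx (fun t' x' v' => f t' x' v' - u t' x' v') t x v := by
      rw [eDxw]; ring
    have e2vv : Dv (Dv u) t x v
        = Dv (Dv f) t x v - Dv (Dv (fun t' x' v' => f t' x' v' - u t' x' v')) t x v := by
      rw [eDvvw]; ring
    have e2V : Dv (fun t' x' z => z * u t' x' z) t x v
        = Dv (fun t' x' z => z * f t' x' z) t x v
          - Dv (fun t' x' z => z * (f t' x' z - u t' x' z)) t x v := by
      rw [eVf, eVu, eVw, eDvw]; ring
    have hPDEp := hPDE t ht x hx v hv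
    have hval : FPresidual σ β u t x v
        = -(Dt (fun t' x' v' => f t' x' v' - u t' x' v') t x v
            + v * Dx (fun t' x' v' => f t' x' v' - u t' x' v') t x v
            - σ * Dv (Dv (fun t' x' v' => f t' x' v' - u t' x' v')) t x v
            - β * Dv (fun t' x' z => z * (f t' x' z - u t' x' z)) t x v) := by
      simp only [FPresidual]
      rw [e2, e2x, e2vv, e2V]
      linear_combination hPDEp
    -- bounds
    have hv10 : |v| ≤ 10 := by
      rw [abs_le]; exact ⟨hv.1, hv.2⟩
    have hb0 : |f t x v - u t x v| < ε :=
      hclose 0 0 0 (by norm_num) (by norm_num) (by norm_num) t ht x hx v hv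
    have hb1 : |Dt (fun t' x' v' => f t' x' v' - u t' x' v') t x v| < ε :=
      hclose 1 0 0 (by norm_num) (by norm_num) (by norm_num) t ht x hx v hv
    have hb2 : |Dx (fun t' x' v' => f t' x' v' - u t' x' v') t x v| < ε :=
      hclose 0 1 0 (by norm_num) (by norm_num) (by norm_num) t ht x hx v hv
    have hb3 : |Dv (fun t' x' v' => f t' x' v' - u t' x' v') t x v| < ε :=
      hclose 0 0 1 (by norm_num) (by norm_num) (by norm_num) t ht x hx v hv
    have hb4 : |Dv (Dv (fun t' x' v' => f t' x' v' - u t' x' v')) t x v| < ε :=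
      hclose 0 0 2 (by norm_num) (by norm_num) (by norm_num) t ht x hx v hv
    have habs : |FPresidual σ β u t x v| ≤ (11 + σ + 11*β) * ε := by
      rw [hval, abs_neg]
      have t2 : |v * Dx (fun t' x' v' => f t' x' v' - u t' x' v') t x v| ≤ 10 * ε := by
        rw [abs_mul]
        exact mul_le_mul hv10 hb2.le (abs_nonneg _) (by norm_num)
      have t3 : |σ * Dv (Dv (fun t' x' v' => f t' x' v' - u t' x' v')) t x v| ≤ σ * ε := by
        rw [abs_mul, abs_of_pos hσ]
        exact mul_le_mul_of_nonneg_left hb4.le hσ.le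
      have t4 : |β * Dv (fun t' x' z => z * (f t' x' z - u t' x' z)) t x v| ≤ β * (11 * ε) := by
        rw [abs_mul, abs_of_nonneg hβ]
        refine mul_le_mul_of_nonneg_left ?_ hβ
        rw [eVw]
        calc |(f t x v - u t x v)
              + v * Dv (fun t' x' v' => f t' x' v' - u t' x' v') t x v|
            ≤ |f t x v - u t x v|
              + |v * Dv (fun t' x' v' => f t' x' v' - u t' x' v') t x v| := abs_add_le _ _
          _ ≤ ε + 10 * ε := by
              refine add_le_add hb0.le ?_
              rw [abs_mul]
              exact mul_le_mul hv10 hb3.le (abs_nonneg _) (by norm_num)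
          _ = 11 * ε := by ring
      have := abs_add4' (Dt (fun t' x' v' => f t' x' v' - u t' x' v') t x v)
        (v * Dx (fun t' x' v' => f t' x' v' - u t' x' v') t x v)
        (σ * Dv (Dv (fun t' x' v' => f t' x' v' - u t' x' v')) t x v)
        (β * Dv (fun t' x' z => z * (f t' x' z - u t' x' z)) t x v)
      have hM : β * (11 * ε) = 11 * β * ε := by ring
      linarith [this, hb1.le, t2, t3, t4]
    calc (FPresidual σ β u t x v) ^ 2 = |FPresidual σ β u t x v| ^ 2 := (sq_abs _).symm
      _ ≤ ((11 + σ + 11*β) * ε) ^ 2 := by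
          have h0 : (0:ℝ) ≤ |FPresidual σ β u t x v| := abs_nonneg _
          exact pow_le_pow_left₀ h0 habs 2
  -- bound on LossGE
  set M2 : ℝ := ((11 + σ + 11*β) * ε) ^ 2 with hM2
  have hGE : LossGE σ β T u ≤ 40 * T * M2 := by
    have inner2 : ∀ t ∈ Set.Icc (0:ℝ) T,
        |∫ x in (-1:ℝ)..1, ∫ v in (-10:ℝ)..10, (FPresidual σ β u t x v) ^ 2| ≤ 40 * M2 := by
      intro t ht
      have hx1 : ∀ x ∈ Set.Ioc (-1:ℝ) 1,
          |∫ v in (-10:ℝ)..10, (FPresidual σ β u t x v) ^ 2| ≤ 20 * M2 := by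
        intro x hx
        have hb : ∀ v ∈ Set.Ioc (-10:ℝ) 10, |(FPresidual σ β u t x v) ^ 2| ≤ M2 := by
          intro v hv
          rw [abs_of_nonneg (sq_nonneg _)]
          exact hres t ht x (Set.Ioc_subset_Icc_self hx) v (Set.Ioc_subset_Icc_self hv)
        have := abs_intervalIntegral_le' (fun v => (FPresidual σ β u t x v) ^ 2)
          (by norm_num : (-10:ℝ) ≤ 10) hb
        calc |∫ v in (-10:ℝ)..10, (FPresidual σ β u t x v) ^ 2|
            ≤ M2 * (10 - (-10)) := this
          _ = 20 * M2 := by ring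
      have := abs_intervalIntegral_le'
        (fun x => ∫ v in (-10:ℝ)..10, (FPresidual σ β u t x v) ^ 2)
        (by norm_num : (-1:ℝ) ≤ 1) hx1
      calc |∫ x in (-1:ℝ)..1, ∫ v in (-10:ℝ)..10, (FPresidual σ β u t x v) ^ 2|
          ≤ 20 * M2 * (1 - (-1)) := this
        _ = 40 * M2 := by ring
    have := intervalIntegral_le'
      (fun t => ∫ x in (-1:ℝ)..1, ∫ v in (-10:ℝ)..10, (FPresidual σ β u t x v) ^ 2)
      hT.le (fun t ht => inner2 t (Set.Ioc_subset_Icc_self ht))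
    calc LossGE σ β T u ≤ 40 * M2 * (T - 0) := this
      _ = 40 * T * M2 := by ring
  -- bound on LossIC
  have hIC' : LossIC f0 u ≤ 40 * ε ^ 2 := by
    have hx1 : ∀ x ∈ Set.Ioc (-1:ℝ) 1,
        |∫ v in (-10:ℝ)..10, (u 0 x v - f0 x v) ^ 2| ≤ 20 * ε ^ 2 := by
      intro x hx
      have hb : ∀ v ∈ Set.Ioc (-10:ℝ) 10, |(u 0 x v - f0 x v) ^ 2| ≤ ε ^ 2 := by
        intro v hv
        have hxI := Set.Ioc_subset_Icc_self hx
        have hvI := Set.Ioc_subset_Icc_self hv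
        have h0T : (0:ℝ) ∈ Set.Icc (0:ℝ) T := ⟨le_refl 0, hT.le⟩
        have hw := hclose 0 0 0 (by norm_num) (by norm_num) (by norm_num) 0 h0T x hxI v hvI
        have heq : u 0 x v - f0 x v = -(f 0 x v - u 0 x v) := by
          rw [← hIC x hxI v hvI]; ring
        rw [abs_of_nonneg (sq_nonneg _), heq, neg_sq, ← sq_abs]
        exact pow_le_pow_left₀ (abs_nonneg _) hw.le 2
      have := abs_intervalIntegral_le' (fun v => (u 0 x v - f0 x v) ^ 2)
        (by norm_num : (-10:ℝ) ≤ 10) hb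
      calc |∫ v in (-10:ℝ)..10, (u 0 x v - f0 x v) ^ 2| ≤ ε ^ 2 * (10 - (-10)) := this
        _ = 20 * ε ^ 2 := by ring
    have := intervalIntegral_le' (fun x => ∫ v in (-10:ℝ)..10, (u 0 x v - f0 x v) ^ 2)
      (by norm_num : (-1:ℝ) ≤ 1) hx1
    calc LossIC f0 u ≤ 20 * ε ^ 2 * (1 - (-1)) := this
      _ = 40 * ε ^ 2 := by ring
  -- bound on LossBCinflow
  have h0ae : ∀ᵐ v : ℝ, v ≠ (0:ℝ) := by
    rw [MeasureTheory.ae_iff]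
    have h : {v : ℝ | ¬ v ≠ 0} = {0} := by ext v; simp
    rw [h]
    exact measure_singleton 0
  have hBC' : LossBCinflow T g u ≤ 20 * T * ε ^ 2 := by
    have hb : ∀ t ∈ Set.Icc (0:ℝ) T,
        |(∫ v in (-10:ℝ)..0, (u t 1 v - g t 1 v) ^ 2)
          + (∫ v in (0:ℝ)..10, (u t (-1) v - g t (-1) v) ^ 2)| ≤ 20 * ε ^ 2 := by
      intro t ht
      have hx1 : (1:ℝ) ∈ Set.Icc (-1:ℝ) 1 := by norm_num
      have hxm1 : (-1:ℝ) ∈ Set.Icc (-1:ℝ) 1 := by norm_num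
      -- first piece
      have hAe : (∫ v in (-10:ℝ)..0, (u t 1 v - g t 1 v) ^ 2)
          = ∫ v in (-10:ℝ)..0, (f t 1 v - u t 1 v) ^ 2 := by
        apply intervalIntegral.integral_congr_ae
        filter_upwards [h0ae] with v hv0 hvI
        rw [Set.uIoc_of_le (by norm_num : (-10:ℝ) ≤ 0)] at hvI
        have hvlt : v < 0 := lt_of_le_of_ne hvI.2 hv0
        have hvK : v ∈ Set.Icc (-10:ℝ) 10 := ⟨hvI.1.le, by linarith⟩
        rw [← (hBC t ht).1 v hvK hvlt]
        ring
      have hA : (∫ v in (-10:ℝ)..0, (u t 1 v - g t 1 v) ^ 2) ≤ 10 * ε ^ 2 := by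
        rw [hAe]
        have hbv : ∀ v ∈ Set.Ioc (-10:ℝ) 0, |(f t 1 v - u t 1 v) ^ 2| ≤ ε ^ 2 := by
          intro v hv
          have hvK : v ∈ Set.Icc (-10:ℝ) 10 := ⟨hv.1.le, by linarith [hv.2]⟩
          have hw := hclose 0 0 0 (by norm_num) (by norm_num) (by norm_num) t ht 1 hx1 v hvK
          rw [abs_of_nonneg (sq_nonneg _), ← sq_abs]
          exact pow_le_pow_left₀ (abs_nonneg _) hw.le 2
        have := intervalIntegral_le' (fun v => (f t 1 v - u t 1 v) ^ 2)
          (by norm_num : (-10:ℝ) ≤ 0) hbv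
        calc (∫ v in (-10:ℝ)..0, (f t 1 v - u t 1 v) ^ 2) ≤ ε ^ 2 * (0 - (-10)) := this
          _ = 10 * ε ^ 2 := by ring
      have hA0 : 0 ≤ ∫ v in (-10:ℝ)..0, (u t 1 v - g t 1 v) ^ 2 :=
        intervalIntegral.integral_nonneg (by norm_num) (fun v _ => sq_nonneg _)
      -- second piece
      have hB : (∫ v in (0:ℝ)..10, (u t (-1) v - g t (-1) v) ^ 2) ≤ 10 * ε ^ 2 := by
        have hbv : ∀ v ∈ Set.Ioc (0:ℝ) 10, |(u t (-1) v - g t (-1) v) ^ 2| ≤ ε ^ 2 := by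
          intro v hv
          have hvK : v ∈ Set.Icc (-10:ℝ) 10 := ⟨by linarith [hv.1], hv.2⟩
          have hfg := (hBC t ht).2 v hvK hv.1
          have hw := hclose 0 0 0 (by norm_num) (by norm_num) (by norm_num) t ht (-1) hxm1 v hvK
          have heq : u t (-1) v - g t (-1) v = -(f t (-1) v - u t (-1) v) := by
            rw [← hfg]; ring
          rw [abs_of_nonneg (sq_nonneg _), heq, neg_sq, ← sq_abs]
          exact pow_le_pow_left₀ (abs_nonneg _) hw.le 2
        have := intervalIntegral_le' (fun v => (u t (-1) v - g t (-1) v) ^ 2)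
          (by norm_num : (0:ℝ) ≤ 10) hbv
        calc (∫ v in (0:ℝ)..10, (u t (-1) v - g t (-1) v) ^ 2) ≤ ε ^ 2 * (10 - 0) := this
          _ = 10 * ε ^ 2 := by ring
      have hB0 : 0 ≤ ∫ v in (0:ℝ)..10, (u t (-1) v - g t (-1) v) ^ 2 :=
        intervalIntegral.integral_nonneg (by norm_num) (fun v _ => sq_nonneg _)
      rw [abs_of_nonneg (by linarith)]
      linarith
    have := intervalIntegral_le'
      (fun t => (∫ v in (-10:ℝ)..0, (u t 1 v - g t 1 v) ^ 2)
        + (∫ v in (0:ℝ)..10, (u t (-1) v - g t (-1) v) ^ 2))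
      hT.le (fun t ht => hb t (Set.Ioc_subset_Icc_self ht))
    calc LossBCinflow T g u ≤ 20 * ε ^ 2 * (T - 0) := this
      _ = 20 * T * ε ^ 2 := by ring
  have hM2eq : M2 = (11 + σ + 11*β) ^ 2 * ε ^ 2 := by rw [hM2]; ring
  calc LossGE σ β T u + LossIC f0 u + LossBCinflow T g u
      ≤ 40 * T * M2 + 40 * ε ^ 2 + 20 * T * ε ^ 2 := by linarith
    _ = (40 * T * (11 + σ + 11 * β) ^ 2 + 40 + 20 * T) * ε ^ 2 := by rw [hM2eq]; ring
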